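/- For any table r and any lists of attributes X and Y: r satisfies the order dependency X ↦→ X ++ Y if and only if for every attribute A occurring in Y, A is a constant in the context set(X) over r (i.e., r satisfies the set-based canonical OD set(X): [] ↦→ A), where set(X) denotes the set of entries of the list X. -/

import Mathlib

/-- `ordLE X t s` : the lexicographic weak order `t ≼_X s` induced by a list
of attributes `X` (each attribute is a function `τ → ℤ`). -/
def ordLE {τ : Type*} : List (τ → ℤ) → τ → τ → Prop
  | [], _, _ => True
  | A :: T, t, s => A t < A s ∨ (A t = A s ∧ ordLE T t s)

/-- The table `r` satisfies the order dependency (OD) `X ↦→ Y`. -/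
def satOD {τ : Type*} (r : List τ) (X Y : List (τ → ℤ)) : Prop :=
  ∀ t ∈ r, ∀ s ∈ r, ordLE X t s → ordLE Y t s

/-- `X` and `Y` are order equivalent over `r` (`X ↔ Y`). -/
def orderEquiv {τ : Type*} (r : List τ) (X Y : List (τ → ℤ)) : Prop :=
  satOD r X Y ∧ satOD r Y X

/-- `X` and `Y` are order compatible over `r` (the OCD `X ~ Y`). -/
def satOCD {τ : Type*} (r : List τ) (X Y : List (τ → ℤ)) : Prop :=
  orderEquiv r (X ++ Y) (Y ++ X)

/-- The table `r` satisfies the functional dependency (FD) `X → Y`. -/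
def satFD {τ : Type*} (r : List τ) (X Y : Finset (τ → ℤ)) : Prop :=
  ∀ t ∈ r, ∀ s ∈ r, (∀ A ∈ X, A t = A s) → ∀ B ∈ Y, B t = B s

/-- Attribute `A` is a constant in the context `Z` over `r`
(the set-based canonical OD `Z : [] ↦→ A`). -/
def constIn {τ : Type*} [DecidableEq (τ → ℤ)] (r : List τ) (Z : Finset (τ → ℤ))
    (A : τ → ℤ) : Prop :=
  ∀ Zp : List (τ → ℤ), Zp.Nodup → Zp.toFinset = Z → satOD r Zp (Zp ++ [A])

/-- Attributes `A` and `B` are order compatible in the context `Z` over `r`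
(the set-based canonical OCD `Z : A ~ B`). -/
def ocIn {τ : Type*} [DecidableEq (τ → ℤ)] (r : List τ) (Z : Finset (τ → ℤ))
    (A B : τ → ℤ) : Prop :=
  ∀ Zp : List (τ → ℤ), Zp.Nodup → Zp.toFinset = Z → satOCD r (Zp ++ [A]) (Zp ++ [B])

/-!
An OD `X ↦→ X ++ Y` says nothing about tuples that differ on `X`, while for tuples `t`, `s` that
agree on `X` it forces `t ≼_Y s` and, by symmetry, `s ≼_Y t`; since `≼_Y` is antisymmetric up to
agreement on `Y`, the OD is exactly the FD `set(X) → set(Y)`. Applied with `Y = [A]` and any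
permutation of `Z`, the same equivalence identifies `Z: [] ↦→ A` with the FD `Z → {A}`, and an FD
with a set on its right-hand side splits into one FD per attribute.
-/

section ordLE

variable {τ : Type*} {X Y : List (τ → ℤ)} {t s : τ}

lemma ordLE_of_forall_eq (h : ∀ A ∈ X, A t = A s) : ordLE X t s := by
  induction X with
  | nil => trivial
  | cons B T ih =>
    exact Or.inr ⟨h B List.mem_cons_self, ih fun A hA => h A (List.mem_cons_of_mem _ hA)⟩

lemma ordLE_append :
    ordLE (X ++ Y) t s ↔ ordLE X t s ∧ ((∀ A ∈ X, A t = A s) → ordLE Y t s) := by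
  induction X with
  | nil => simp [ordLE]
  | cons B T ih =>
    simp only [List.cons_append, ordLE, ih, List.mem_cons, forall_eq_or_imp]
    constructor
    · rintro (hlt | ⟨heq, hT, hY⟩)
      · exact ⟨Or.inl hlt, fun ⟨heq, _⟩ => absurd heq hlt.ne⟩
      · exact ⟨Or.inr ⟨heq, hT⟩, fun ⟨_, hrest⟩ => hY hrest⟩
    · rintro ⟨hlt | ⟨heq, hT⟩, hY⟩
      · exact Or.inl hlt
      · exact Or.inr ⟨heq, hT, fun hrest => hY ⟨heq, hrest⟩⟩

lemma forall_eq_of_ordLE_of_ordLE (hts : ordLE X t s) (hst : ordLE X s t) :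
    ∀ A ∈ X, A t = A s := by
  induction X with
  | nil => simp
  | cons B T ih =>
    rcases hts with hlt | ⟨heq, hts⟩
    · rcases hst with hgt | ⟨heq', _⟩
      · exact absurd (hlt.trans hgt) (lt_irrefl _)
      · exact absurd heq' hlt.ne'
    · rcases hst with hgt | ⟨_, hst⟩
      · exact absurd heq hgt.ne'
      · exact List.forall_mem_cons.2 ⟨heq, ih hts hst⟩

end ordLE

section satFD

variable {τ : Type*} (r : List τ)

theorem satFD_iff_forall_singleton (X Y : Finset (τ → ℤ)) :
    satFD r X Y ↔ ∀ B ∈ Y, satFD r X {B} := by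
  simp only [satFD, Finset.mem_singleton, forall_eq]
  exact ⟨fun h B hB t ht s hs hX => h t ht s hs hX B hB,
    fun h t ht s hs hX B hB => h B hB t ht s hs hX⟩

variable [DecidableEq (τ → ℤ)]

theorem satOD_append_iff_satFD (X Y : List (τ → ℤ)) :
    satOD r X (X ++ Y) ↔ satFD r X.toFinset Y.toFinset := by
  simp only [satOD, satFD, List.mem_toFinset]
  constructor
  · intro hOD t ht s hs hX
    have hX' : ∀ A ∈ X, A s = A t := fun A hA => (hX A hA).symm
    exact forall_eq_of_ordLE_of_ordLE
      ((ordLE_append.1 (hOD t ht s hs (ordLE_of_forall_eq hX))).2 hX)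
      ((ordLE_append.1 (hOD s hs t ht (ordLE_of_forall_eq hX'))).2 hX')
  · intro hFD t ht s hs hts
    exact ordLE_append.2 ⟨hts, fun hX => ordLE_of_forall_eq (hFD t ht s hs hX)⟩

theorem constIn_iff_satFD (Z : Finset (τ → ℤ)) (A : τ → ℤ) :
    constIn r Z A ↔ satFD r Z {A} := by
  constructor
  · intro hA
    simpa [satOD_append_iff_satFD] using hA Z.toList Z.nodup_toList Z.toList_toFinset
  · rintro hFD Zp - rfl
    simpa [satOD_append_iff_satFD] using hFD

end satFD

theorem stmt_3 {τ : Type*} [DecidableEq (τ → ℤ)] (r : List τ) (X Y : List (τ → ℤ)) :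
    satOD r X (X ++ Y) ↔ ∀ A ∈ Y, constIn r X.toFinset A := by
  rw [satOD_append_iff_satFD, satFD_iff_forall_singleton]
  simp only [List.mem_toFinset, constIn_iff_satFD]
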